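/- arXiv:0806.3164 — 2 statements merged into one kernel-verified Lean document; each statement's English description precedes it below -/
import Mathlib

section
/- For a Lindblad generator, the condition D(PρP) = P D(PρP) P for all matrices ρ is equivalent to T^t(PρP) = P T^t(PρP) P for all t ≥ 0 and all ρ. -/
open Matrix
open scoped Matrix.Norms.L2Operator ComplexOrder

/-- The GKS--Lindblad generator with Hamiltonian `H` and transition operators `h α`. -/
noncomputable def lindblad {n : ℕ} {ι : Type*} [Fintype ι]
    (H : Matrix (Fin n) (Fin n) ℂ) (h : ι → Matrix (Fin n) (Fin n) ℂ)
    (ρ : Matrix (Fin n) (Fin n) ℂ) : Matrix (Fin n) (Fin n) ℂ :=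
  -Complex.I • (H * ρ - ρ * H) +
    ∑ α, (h α * ρ * (h α)ᴴ - (1/2 : ℂ) • ((h α)ᴴ * h α * ρ + ρ * ((h α)ᴴ * h α)))

/-!
If `D` maps `P σ P` to `P (D (P σ P)) P`, then for a trajectory `x` with `x 0 = P (x 0) P` the
defect `x - P x P` solves the linear equation `y' = D y - P (D y) P` with zero initial value, so it
vanishes by uniqueness of solutions. Conversely, if the defect vanishes for all `t ≥ 0`, its
one-sided derivative at `0`, which is `D σ - P (D σ) P`, vanishes too.
-/

section LinearODE

variable {E : Type*} [NormedAddCommGroup E] [NormedSpace ℝ E]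

theorem ContinuousLinearMap.eq_zero_of_hasDerivAt_apply (M : E →L[ℝ] E) {g : ℝ → E}
    (hg : ∀ s, HasDerivAt g (M (g s)) s) {a t : ℝ} (ha : g a = 0) (ht : a ≤ t) : g t = 0 :=
  ODE_solution_unique (v := fun _ => M) (g := fun _ => 0) (fun _ => M.lipschitz)
    (fun s _ => (hg s).continuousAt.continuousWithinAt) (fun s _ => (hg s).hasDerivWithinAt)
    continuousOn_const (fun s _ => by simpa using hasDerivWithinAt_const s (Set.Ici s) (0 : E))
    ha (Set.right_mem_Icc.mpr ht)

theorem apply_eq_self_of_hasDerivAt_of_map_range (D Φ : E →L[ℝ] E)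
    (hD : ∀ y, Φ (D (Φ y)) = D (Φ y)) {x : ℝ → E} (hx : ∀ s, HasDerivAt x (D (x s)) s)
    {a t : ℝ} (ha : Φ (x a) = x a) (ht : a ≤ t) : Φ (x t) = x t := by
  set g : ℝ → E := fun s => x s - Φ (x s)
  have hg : ∀ s, HasDerivAt g ((D - Φ ∘L D) (g s)) s := fun s => by
    have hdefect : (D - Φ ∘L D) (g s) = D (x s) - Φ (D (x s)) := by
      simp only [g, _root_.sub_apply, ContinuousLinearMap.comp_apply, map_sub, hD]
      abel
    rw [hdefect]
    exact (hx s).sub (Φ.hasFDerivAt.comp_hasDerivAt s (hx s))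
  exact (sub_eq_zero.mp ((D - Φ ∘L D).eq_zero_of_hasDerivAt_apply hg (sub_eq_zero.mpr ha.symm)
    ht)).symm

theorem HasDerivAt.apply_eq_self_of_forall_ge (Φ : E →L[ℝ] E) {x : ℝ → E} {v : E} {a : ℝ}
    (hx : HasDerivAt x v a) (hfix : ∀ s ≥ a, Φ (x s) = x s) : Φ v = v := by
  have hΦx : HasDerivWithinAt x (Φ v) (Set.Ici a) a :=
    (Φ.hasFDerivAt.comp_hasDerivAt a hx).hasDerivWithinAt.congr (fun s hs => (hfix s hs).symm)
      (hfix a le_rfl).symm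
  exact (uniqueDiffOn_Ici a a Set.self_mem_Ici).eq_deriv _ hΦx hx.hasDerivWithinAt

end LinearODE

section Lindblad

variable {n : ℕ} {ι : Type*} [Fintype ι]

noncomputable def lindbladLinearMap (H : Matrix (Fin n) (Fin n) ℂ)
    (h : ι → Matrix (Fin n) (Fin n) ℂ) :
    Matrix (Fin n) (Fin n) ℂ →ₗ[ℂ] Matrix (Fin n) (Fin n) ℂ :=
  -Complex.I • (LinearMap.mulLeft ℂ H - LinearMap.mulRight ℂ H) +
    ∑ α, ((LinearMap.mulRight ℂ (h α)ᴴ).comp (LinearMap.mulLeft ℂ (h α)) -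
      (1/2 : ℂ) • (LinearMap.mulLeft ℂ ((h α)ᴴ * h α) + LinearMap.mulRight ℂ ((h α)ᴴ * h α)))

@[simp]
theorem lindbladLinearMap_apply (H : Matrix (Fin n) (Fin n) ℂ)
    (h : ι → Matrix (Fin n) (Fin n) ℂ) (ρ : Matrix (Fin n) (Fin n) ℂ) :
    lindbladLinearMap H h ρ = lindblad H h ρ := by
  simp [lindbladLinearMap, lindblad, LinearMap.sum_apply, mul_assoc]

noncomputable def lindbladCLM (H : Matrix (Fin n) (Fin n) ℂ)
    (h : ι → Matrix (Fin n) (Fin n) ℂ) :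
    Matrix (Fin n) (Fin n) ℂ →L[ℝ] Matrix (Fin n) (Fin n) ℂ :=
  LinearMap.toContinuousLinearMap ((lindbladLinearMap H h).restrictScalars ℝ)

@[simp]
theorem lindbladCLM_apply (H : Matrix (Fin n) (Fin n) ℂ)
    (h : ι → Matrix (Fin n) (Fin n) ℂ) (ρ : Matrix (Fin n) (Fin n) ℂ) :
    lindbladCLM H h ρ = lindblad H h ρ := by
  simp [lindbladCLM]

end Lindblad

noncomputable def compressCLM {n : ℕ} (P : Matrix (Fin n) (Fin n) ℂ) :
    Matrix (Fin n) (Fin n) ℂ →L[ℝ] Matrix (Fin n) (Fin n) ℂ :=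
  LinearMap.toContinuousLinearMap ((LinearMap.mulRight ℝ P).comp (LinearMap.mulLeft ℝ P))

@[simp]
theorem compressCLM_apply {n : ℕ} (P ρ : Matrix (Fin n) (Fin n) ℂ) :
    compressCLM P ρ = P * ρ * P := by
  simp [compressCLM]

theorem stmt6_general {n : ℕ} {ι : Type*} [Fintype ι]
    (H : Matrix (Fin n) (Fin n) ℂ)
    (h : ι → Matrix (Fin n) (Fin n) ℂ)
    (T : ℝ → Matrix (Fin n) (Fin n) ℂ →ₗ[ℂ] Matrix (Fin n) (Fin n) ℂ)
    (hT0 : T 0 = LinearMap.id)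
    (hTderiv : ∀ (ρ : Matrix (Fin n) (Fin n) ℂ) (t : ℝ),
      HasDerivAt (fun s => T s ρ) (lindblad H h (T t ρ)) t)
    (P : Matrix (Fin n) (Fin n) ℂ) (hP : P * P = P) :
    (∀ ρ : Matrix (Fin n) (Fin n) ℂ,
        lindblad H h (P * ρ * P) = P * lindblad H h (P * ρ * P) * P) ↔
      (∀ t ≥ (0:ℝ), ∀ ρ : Matrix (Fin n) (Fin n) ℂ,
        T t (P * ρ * P) = P * T t (P * ρ * P) * P) := by
  have hflow : ∀ ρ s, HasDerivAt (fun s => T s ρ) (lindbladCLM H h (T s ρ)) s := by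
    simpa using hTderiv
  constructor
  · intro hgen t ht ρ
    have hinit : compressCLM P (T 0 (P * ρ * P)) = T 0 (P * ρ * P) := by
      simp only [hT0, LinearMap.id_apply, compressCLM_apply, ← mul_assoc, hP]
      rw [mul_assoc (P * ρ), hP]
    simpa [eq_comm] using apply_eq_self_of_hasDerivAt_of_map_range (lindbladCLM H h)
      (compressCLM P) (by simpa [eq_comm] using hgen) (hflow _) hinit ht
  · intro hsemi ρ
    simpa [hT0, eq_comm] using
      (hflow (P * ρ * P) 0).apply_eq_self_of_forall_ge (compressCLM P)
        (by simpa [eq_comm] using fun s hs => hsemi s hs ρ)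

/-- The first-order condition `D(PρP) = P D(PρP) P` for all `ρ` is equivalent to
`T^t(PρP) = P T^t(PρP) P` for all `t ≥ 0` and all `ρ`. -/
theorem stmt6 {n : ℕ} {ι : Type*} [Fintype ι]
    (H : Matrix (Fin n) (Fin n) ℂ) (hH : H.IsHermitian)
    (h : ι → Matrix (Fin n) (Fin n) ℂ)
    (T : ℝ → Matrix (Fin n) (Fin n) ℂ →ₗ[ℂ] Matrix (Fin n) (Fin n) ℂ)
    (hT0 : T 0 = LinearMap.id)
    (hTderiv : ∀ (ρ : Matrix (Fin n) (Fin n) ℂ) (t : ℝ),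
      HasDerivAt (fun s => T s ρ) (lindblad H h (T t ρ)) t)
    (P : Matrix (Fin n) (Fin n) ℂ) (hP : P * P = P) (hPh : Pᴴ = P) :
    (∀ ρ : Matrix (Fin n) (Fin n) ℂ,
        lindblad H h (P * ρ * P) = P * lindblad H h (P * ρ * P) * P) ↔
      (∀ t ≥ (0:ℝ), ∀ ρ : Matrix (Fin n) (Fin n) ℂ,
        T t (P * ρ * P) = P * T t (P * ρ * P) * P) :=
  stmt6_general H h T hT0 hTderiv P hP
end

section
/- If the stationary eigenmatrix σ of a Lindblad generator (D(σ)=0) is self-adjoint but not positive semidefinite, and σ = ρ₊ − ρ₋ is its Jordan decomposition into positive and negative parts, then both ρ₊ and ρ₋ are separately stationary: D(ρ₊) = D(ρ₋) = 0. -/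
open Matrix
open scoped Matrix.Norms.L2Operator ComplexOrder

/-!
Since `L σ = 0` and `L` is linear, `X := L ρ₊ = L ρ₋`. Let `P₊`, `P₋` be the support projections
of `ρ₊`, `ρ₋`. For a projection `R` with `R ρ = 0` one has `tr (R L ρ) = ∑ tr (R hα ρ (R hα)ᴴ) ≥ 0`;
taking `R = P₋` for `ρ₊` and `1 - P₋` for `ρ₋` (and symmetrically), the two nonnegative traces
add up to `tr X = 0`, so they vanish: every `hα` maps the support of `ρ₊` into itself, and
likewise for `ρ₋`. What survives of `X` is the block `P₋ X P₊`, which equals both `-i A ρ₊` and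
`i ρ₋ A` for `A = P₋ H P₊`. Now `A ρ₊ + ρ₋ A = 0` with `ρ₊, ρ₋ ≥ 0` forces `ρ₋ A = 0` (take the
trace of `A ρ₊ Aᴴ = -ρ₋ A Aᴴ`), hence `X P₊ = 0`, and then
`X = (1 - P₊) X (1 - P₊) = ∑ (1 - P₊) hα ρ₊ hαᴴ (1 - P₊) = 0`.
-/

namespace Matrix

variable {m 𝕜 : Type*} [Fintype m] [RCLike 𝕜]

namespace PosSemidef

lemma sum_trace_mul_mul_conjTranspose_nonneg {ι : Type*} [Fintype ι] {A : Matrix m m 𝕜}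
    (hA : A.PosSemidef) (M : ι → Matrix m m 𝕜) : 0 ≤ ∑ α, (M α * A * (M α)ᴴ).trace :=
  Finset.sum_nonneg fun α _ => (hA.mul_mul_conjTranspose_same (M α)).trace_nonneg

variable [DecidableEq m]

open scoped MatrixOrder in
lemma mul_eq_zero_of_mul_mul_conjTranspose_eq_zero {A M : Matrix m m 𝕜} (hA : A.PosSemidef)
    (h : M * A * Mᴴ = 0) : M * A = 0 := by
  obtain ⟨B, rfl⟩ := CStarAlgebra.nonneg_iff_eq_star_mul_self.mp hA.nonneg
  have hMB : (M * Bᴴ) * (M * Bᴴ)ᴴ = 0 := by simpa [star_eq_conjTranspose, Matrix.mul_assoc] using h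
  rw [star_eq_conjTranspose, ← Matrix.mul_assoc, self_mul_conjTranspose_eq_zero.mp hMB,
    Matrix.zero_mul]

lemma sum_trace_mul_mul_conjTranspose_eq_zero_iff {ι : Type*} [Fintype ι] {A : Matrix m m 𝕜}
    (hA : A.PosSemidef) (M : ι → Matrix m m 𝕜) :
    ∑ α, (M α * A * (M α)ᴴ).trace = 0 ↔ ∀ α, M α * A = 0 := by
  rw [Finset.sum_eq_zero_iff_of_nonneg fun α _ =>
    (hA.mul_mul_conjTranspose_same (M α)).trace_nonneg]
  refine forall_congr' fun α => ⟨fun h => ?_, fun h => by simp [h]⟩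
  exact hA.mul_eq_zero_of_mul_mul_conjTranspose_eq_zero
    ((hA.mul_mul_conjTranspose_same (M α)).trace_eq_zero_iff.mp (h (Finset.mem_univ α)))

lemma mul_eq_zero_of_mul_add_mul_eq_zero {A B X : Matrix m m 𝕜} (hA : A.PosSemidef)
    (hB : B.PosSemidef) (h : X * A + B * X = 0) : X * A = 0 ∧ B * X = 0 := by
  have htrace : (X * A * Xᴴ).trace = -(Xᴴ * B * X).trace := by
    rw [eq_neg_of_add_eq_zero_left h, Matrix.neg_mul, trace_neg, trace_mul_comm,
      ← Matrix.mul_assoc]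
  have hXAX : (X * A * Xᴴ).trace = 0 :=
    le_antisymm (htrace ▸ neg_nonpos.mpr (hB.conjTranspose_mul_mul_same X).trace_nonneg)
      (hA.mul_mul_conjTranspose_same X).trace_nonneg
  have hXA := hA.mul_eq_zero_of_mul_mul_conjTranspose_eq_zero
    ((hA.mul_mul_conjTranspose_same X).trace_eq_zero_iff.mp hXAX)
  exact ⟨hXA, by rwa [hXA, zero_add] at h⟩

end PosSemidef

variable [DecidableEq m]

/-- `x * x⁻¹` is the indicator of `x ≠ 0`, since `0⁻¹ = 0`. -/
noncomputable def supportProj (A : Matrix m m 𝕜) : Matrix m m 𝕜 :=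
  cfc (fun x : ℝ => x * x⁻¹) A

lemma continuousOn_spectrum_real (A : Matrix m m 𝕜) (f : ℝ → ℝ) :
    ContinuousOn f (spectrum ℝ A) :=
  (Set.toFinite _).continuousOn f

lemma isStarProjection_supportProj (A : Matrix m m 𝕜) : IsStarProjection A.supportProj := by
  refine ⟨?_, cfc_predicate _ A⟩
  by_cases hA : IsSelfAdjoint A
  · rw [IsIdempotentElem, supportProj,
      ← cfc_mul _ _ A (continuousOn_spectrum_real A _) (continuousOn_spectrum_real A _)]
    congr 1 with x
    rcases eq_or_ne x 0 with rfl | hx <;> simp [*]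
  · rw [supportProj, cfc_apply_of_not_predicate A hA]
    exact .zero

@[simp]
lemma conjTranspose_supportProj (A : Matrix m m 𝕜) : A.supportProjᴴ = A.supportProj :=
  (isStarProjection_supportProj A).isSelfAdjoint

lemma supportProj_eq_mul {A : Matrix m m 𝕜} (hA : A.IsHermitian) :
    A.supportProj = A * cfc (fun x : ℝ => x⁻¹) A := by
  have := cfc_mul (fun x : ℝ => x) (fun x => x⁻¹) A
    (continuousOn_spectrum_real A _) (continuousOn_spectrum_real A _)
  rwa [cfc_id' ℝ A hA.isSelfAdjoint] at this

lemma mul_supportProj {A : Matrix m m 𝕜} (hA : A.IsHermitian) : A * A.supportProj = A := by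
  have := cfc_mul (fun x : ℝ => x) (fun x => x * x⁻¹) A
    (continuousOn_spectrum_real A _) (continuousOn_spectrum_real A _)
  rw [cfc_id' ℝ A hA.isSelfAdjoint] at this
  rw [supportProj, ← this]
  conv_rhs => rw [← cfc_id' ℝ A hA.isSelfAdjoint]
  congr 1 with x
  rcases eq_or_ne x 0 with rfl | hx <;> simp [*]

lemma supportProj_mul {A : Matrix m m 𝕜} (hA : A.IsHermitian) : A.supportProj * A = A := by
  simpa [hA.eq] using congr(($(mul_supportProj hA))ᴴ)

lemma mul_supportProj_eq_zero {A M : Matrix m m 𝕜} (hA : A.IsHermitian) (h : M * A = 0) :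
    M * A.supportProj = 0 := by
  rw [supportProj_eq_mul hA, ← Matrix.mul_assoc, h, Matrix.zero_mul]

lemma supportProj_mul_eq_zero {A M : Matrix m m 𝕜} (hA : A.IsHermitian) (h : A * M = 0) :
    A.supportProj * M = 0 := by
  have hMA : Mᴴ * A = 0 := by simpa [hA.eq] using congr(($h)ᴴ)
  simpa using congr(($(mul_supportProj_eq_zero hA hMA))ᴴ)

end Matrix

section Lindblad

variable {n : ℕ} {ι : Type*} [Fintype ι] {H : Matrix (Fin n) (Fin n) ℂ}
  {h : ι → Matrix (Fin n) (Fin n) ℂ}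

lemma lindblad_sub (ρ₁ ρ₂ : Matrix (Fin n) (Fin n) ℂ) :
    lindblad H h (ρ₁ - ρ₂) = lindblad H h ρ₁ - lindblad H h ρ₂ := by
  rw [lindblad, lindblad, lindblad, add_sub_add_comm, ← smul_sub, ← Finset.sum_sub_distrib]
  congr 1
  · congr 1; simp only [Matrix.mul_sub, Matrix.sub_mul]; abel
  · refine Finset.sum_congr rfl fun α _ => ?_
    simp only [Matrix.mul_sub, Matrix.sub_mul, smul_sub, smul_add]; abel

lemma trace_lindblad (ρ : Matrix (Fin n) (Fin n) ℂ) : (lindblad H h ρ).trace = 0 := by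
  simp only [lindblad, trace_add, trace_smul, trace_sub, trace_sum, trace_mul_comm H ρ,
    sub_self, smul_zero, zero_add]
  refine Finset.sum_eq_zero fun α _ => ?_
  rw [trace_mul_cycle, trace_mul_comm ρ, smul_eq_mul]
  ring

lemma conjTranspose_lindblad (hH : H.IsHermitian) (ρ : Matrix (Fin n) (Fin n) ℂ) :
    (lindblad H h ρ)ᴴ = lindblad H h ρᴴ := by
  simp only [lindblad, conjTranspose_add, conjTranspose_smul, conjTranspose_sub,
    conjTranspose_mul, conjTranspose_conjTranspose, conjTranspose_sum, hH.eq, Matrix.mul_assoc]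
  congr 1
  · rw [← neg_sub (H * ρᴴ), smul_neg]; simp
  · refine Finset.sum_congr rfl fun α _ => ?_
    rw [add_comm (ρᴴ * _)]
    norm_num

lemma mul_lindblad_mul_of_mul_eq_zero {S T ρ : Matrix (Fin n) (Fin n) ℂ} (hS : S * ρ = 0)
    (hT : ρ * T = 0) : S * lindblad H h ρ * T = ∑ α, S * h α * ρ * (h α)ᴴ * T := by
  have hS' : ∀ M, S * (ρ * M) = 0 := fun M => by rw [← Matrix.mul_assoc, hS, Matrix.zero_mul]
  simp only [lindblad, Matrix.mul_add, Matrix.add_mul, Matrix.mul_sub, Matrix.sub_mul,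
    Matrix.mul_smul, Matrix.smul_mul, Finset.mul_sum, Finset.sum_mul, Matrix.mul_assoc, hT, hS',
    Matrix.mul_zero]
  simp

lemma mul_lindblad_of_mul_eq_zero {S ρ : Matrix (Fin n) (Fin n) ℂ} (hS : S * ρ = 0)
    (hSh : ∀ α, S * h α * ρ = 0) (hShh : ∀ α, S * (h α)ᴴ * h α * ρ = 0) :
    S * lindblad H h ρ = -Complex.I • (S * H * ρ) := by
  have hS' : ∀ M, S * (ρ * M) = 0 := fun M => by rw [← Matrix.mul_assoc, hS, Matrix.zero_mul]
  simp only [lindblad, Matrix.mul_add, Matrix.mul_sub, Matrix.mul_smul, Finset.mul_sum,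
    ← Matrix.mul_assoc, hSh, hShh]
  simp [Matrix.mul_assoc, hS']

lemma trace_mul_lindblad {R ρ : Matrix (Fin n) (Fin n) ℂ} (hR : IsStarProjection R)
    (hρ : ρ.IsHermitian) (hRρ : R * ρ = 0) :
    (R * lindblad H h ρ).trace = ∑ α, (R * h α * ρ * (R * h α)ᴴ).trace := by
  have hR' : Rᴴ = R := hR.isSelfAdjoint
  have hρR : ρ * R = 0 := by simpa [hR', hρ.eq] using congr(($hRρ)ᴴ)
  calc (R * lindblad H h ρ).trace = (R * lindblad H h ρ * R).trace := by
        rw [trace_mul_comm _ R, ← Matrix.mul_assoc, hR.isIdempotentElem.eq]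
    _ = _ := by
        rw [mul_lindblad_mul_of_mul_eq_zero hRρ hρR, trace_sum]
        simp only [conjTranspose_mul, hR', Matrix.mul_assoc]

lemma mul_mul_eq_zero_of_lindblad_eq {R ρ₁ ρ₂ : Matrix (Fin n) (Fin n) ℂ}
    (hR : IsStarProjection R) (hρ₁ : ρ₁.PosSemidef) (hρ₂ : ρ₂.PosSemidef) (h₁ : R * ρ₁ = 0)
    (h₂ : (1 - R) * ρ₂ = 0) (hL : lindblad H h ρ₁ = lindblad H h ρ₂) (α : ι) :
    R * h α * ρ₁ = 0 ∧ (1 - R) * h α * ρ₂ = 0 := by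
  have hsum : (R * lindblad H h ρ₁).trace + ((1 - R) * lindblad H h ρ₂).trace = 0 := by
    rw [hL, ← trace_add, ← Matrix.add_mul, add_sub_cancel, Matrix.one_mul, trace_lindblad]
  rw [trace_mul_lindblad hR hρ₁.1 h₁, trace_mul_lindblad hR.one_sub hρ₂.1 h₂,
    add_eq_zero_iff_of_nonneg (hρ₁.sum_trace_mul_mul_conjTranspose_nonneg _)
      (hρ₂.sum_trace_mul_mul_conjTranspose_nonneg _),
    hρ₁.sum_trace_mul_mul_conjTranspose_eq_zero_iff,
    hρ₂.sum_trace_mul_mul_conjTranspose_eq_zero_iff] at hsum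
  exact ⟨hsum.1 α, hsum.2 α⟩

lemma supportProj_mul_mul_eq_zero_of_lindblad_eq {ρ₁ ρ₂ : Matrix (Fin n) (Fin n) ℂ}
    (hρ₁ : ρ₁.PosSemidef) (hρ₂ : ρ₂.PosSemidef) (h₂₁ : ρ₂ * ρ₁ = 0)
    (hL : lindblad H h ρ₁ = lindblad H h ρ₂) (α : ι) :
    ρ₂.supportProj * h α * ρ₁ = 0 ∧ (1 - ρ₂.supportProj) * h α * ρ₂ = 0 :=
  mul_mul_eq_zero_of_lindblad_eq (isStarProjection_supportProj ρ₂) hρ₁ hρ₂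
    (supportProj_mul_eq_zero hρ₂.1 h₂₁)
    (by rw [Matrix.sub_mul, Matrix.one_mul, supportProj_mul hρ₂.1, sub_self]) hL α

lemma supportProj_mul_lindblad_of_lindblad_eq {ρ₁ ρ₂ : Matrix (Fin n) (Fin n) ℂ}
    (hρ₁ : ρ₁.PosSemidef) (hρ₂ : ρ₂.PosSemidef) (h₁₂ : ρ₁ * ρ₂ = 0) (h₂₁ : ρ₂ * ρ₁ = 0)
    (hL : lindblad H h ρ₁ = lindblad H h ρ₂) :
    ρ₂.supportProj * lindblad H h ρ₁ = -Complex.I • (ρ₂.supportProj * H * ρ₁) := by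
  have hjump₁₂ := supportProj_mul_mul_eq_zero_of_lindblad_eq hρ₁ hρ₂ h₂₁ hL
  have hjump₂₁ := supportProj_mul_mul_eq_zero_of_lindblad_eq hρ₂ hρ₁ h₁₂ hL.symm
  refine mul_lindblad_of_mul_eq_zero (supportProj_mul_eq_zero hρ₂.1 h₂₁)
    (fun α => (hjump₁₂ α).1) fun α => ?_
  have hhρ : h α * ρ₁ = ρ₁.supportProj * h α * ρ₁ := by
    rw [← sub_eq_zero, ← (hjump₂₁ α).2, Matrix.sub_mul, Matrix.sub_mul, Matrix.one_mul]
  have hPhP : ρ₁.supportProj * h α * ρ₂.supportProj = 0 :=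
    mul_supportProj_eq_zero hρ₂.1 (hjump₂₁ α).1
  calc ρ₂.supportProj * (h α)ᴴ * h α * ρ₁
      = (ρ₁.supportProj * h α * ρ₂.supportProj)ᴴ * (h α * ρ₁) := by
        conv_lhs => rw [Matrix.mul_assoc, hhρ]
        simp [Matrix.mul_assoc]
    _ = 0 := by rw [hPhP, conjTranspose_zero, Matrix.zero_mul]

lemma lindblad_mul_supportProj_of_lindblad_eq (hH : H.IsHermitian)
    {ρ₁ ρ₂ : Matrix (Fin n) (Fin n) ℂ} (hρ₁ : ρ₁.PosSemidef) (hρ₂ : ρ₂.PosSemidef)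
    (h₁₂ : ρ₁ * ρ₂ = 0) (h₂₁ : ρ₂ * ρ₁ = 0) (hL : lindblad H h ρ₁ = lindblad H h ρ₂) :
    lindblad H h ρ₁ * ρ₁.supportProj =
      Complex.I • (ρ₂ * (ρ₂.supportProj * H * ρ₁.supportProj)) := by
  rw [← Matrix.mul_assoc, ← Matrix.mul_assoc, mul_supportProj hρ₂.1]
  simpa [hL, conjTranspose_lindblad hH, hρ₁.1.eq, hρ₂.1.eq, hH.eq, Matrix.mul_assoc] using
    congr(($(supportProj_mul_lindblad_of_lindblad_eq hρ₂ hρ₁ h₂₁ h₁₂ hL.symm))ᴴ)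

lemma mul_add_mul_eq_zero_of_lindblad_eq (hH : H.IsHermitian)
    {ρ₁ ρ₂ : Matrix (Fin n) (Fin n) ℂ} (hρ₁ : ρ₁.PosSemidef) (hρ₂ : ρ₂.PosSemidef)
    (h₁₂ : ρ₁ * ρ₂ = 0) (h₂₁ : ρ₂ * ρ₁ = 0) (hL : lindblad H h ρ₁ = lindblad H h ρ₂) :
    ρ₂.supportProj * H * ρ₁.supportProj * ρ₁ + ρ₂ * (ρ₂.supportProj * H * ρ₁.supportProj) = 0 := by
  have h₁ : ρ₂.supportProj * lindblad H h ρ₁ * ρ₁.supportProj =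
      -Complex.I • (ρ₂.supportProj * H * ρ₁.supportProj * ρ₁) := by
    rw [supportProj_mul_lindblad_of_lindblad_eq hρ₁ hρ₂ h₁₂ h₂₁ hL]
    simp [Matrix.mul_assoc, mul_supportProj hρ₁.1, supportProj_mul hρ₁.1]
  have h₂ : ρ₂.supportProj * lindblad H h ρ₁ * ρ₁.supportProj =
      Complex.I • (ρ₂ * (ρ₂.supportProj * H * ρ₁.supportProj)) := by
    rw [Matrix.mul_assoc, lindblad_mul_supportProj_of_lindblad_eq hH hρ₁ hρ₂ h₁₂ h₂₁ hL]
    simp [← Matrix.mul_assoc, supportProj_mul hρ₂.1]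
  have h₃ : Complex.I • (ρ₂.supportProj * H * ρ₁.supportProj * ρ₁ +
      ρ₂ * (ρ₂.supportProj * H * ρ₁.supportProj)) = 0 := by
    rw [smul_add, ← h₂, ← neg_neg (Complex.I • _), ← neg_smul, ← h₁, neg_add_cancel]
  exact (smul_eq_zero.mp h₃).resolve_left Complex.I_ne_zero

lemma lindblad_eq_zero_of_mul_supportProj_eq_zero (hH : H.IsHermitian)
    {ρ : Matrix (Fin n) (Fin n) ℂ} (hρ : ρ.PosSemidef)
    (hjump : ∀ α, (1 - ρ.supportProj) * h α * ρ = 0)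
    (hX : lindblad H h ρ * ρ.supportProj = 0) : lindblad H h ρ = 0 := by
  have hPX : ρ.supportProj * lindblad H h ρ = 0 := by
    simpa [conjTranspose_lindblad hH, hρ.1.eq] using congr(($hX)ᴴ)
  have hPρ : (1 - ρ.supportProj) * ρ = 0 := by
    rw [Matrix.sub_mul, Matrix.one_mul, supportProj_mul hρ.1, sub_self]
  have hρP : ρ * (1 - ρ.supportProj) = 0 := by
    rw [Matrix.mul_sub, Matrix.mul_one, mul_supportProj hρ.1, sub_self]
  calc lindblad H h ρ = (1 - ρ.supportProj) * lindblad H h ρ * (1 - ρ.supportProj) := by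
        simp [Matrix.mul_sub, Matrix.sub_mul, hX, hPX]
    _ = 0 := by simp [mul_lindblad_mul_of_mul_eq_zero hPρ hρP, hjump]

end Lindblad

theorem stmt11_general {n : ℕ} {ι : Type*} [Fintype ι]
    (H : Matrix (Fin n) (Fin n) ℂ) (hH : H.IsHermitian)
    (h : ι → Matrix (Fin n) (Fin n) ℂ)
    (σ : Matrix (Fin n) (Fin n) ℂ)
    (hstat : lindblad H h σ = 0)
    (ρp ρm : Matrix (Fin n) (Fin n) ℂ) (hρp : ρp.PosSemidef) (hρm : ρm.PosSemidef)
    (hdec : σ = ρp - ρm) (horth : ρp * ρm = 0) (horth' : ρm * ρp = 0) :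
    lindblad H h ρp = 0 ∧ lindblad H h ρm = 0 := by
  have hL : lindblad H h ρp = lindblad H h ρm := by
    rw [← sub_eq_zero, ← lindblad_sub, ← hdec, hstat]
  have hcoupling := (hρp.mul_eq_zero_of_mul_add_mul_eq_zero hρm
    (mul_add_mul_eq_zero_of_lindblad_eq hH hρp hρm horth horth' hL)).2
  have hXQ : lindblad H h ρp * ρp.supportProj = 0 := by
    rw [lindblad_mul_supportProj_of_lindblad_eq hH hρp hρm horth horth' hL, hcoupling, smul_zero]
  have hp : lindblad H h ρp = 0 :=
    lindblad_eq_zero_of_mul_supportProj_eq_zero hH hρp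
      (fun α => (supportProj_mul_mul_eq_zero_of_lindblad_eq hρm hρp horth hL.symm α).2) hXQ
  exact ⟨hp, hL ▸ hp⟩

/-- If a self-adjoint but not positive semidefinite stationary eigenmatrix `σ` has Jordan
decomposition `σ = ρ₊ - ρ₋`, then both parts are separately stationary. -/
theorem stmt11 {n : ℕ} {ι : Type*} [Fintype ι]
    (H : Matrix (Fin n) (Fin n) ℂ) (hH : H.IsHermitian)
    (h : ι → Matrix (Fin n) (Fin n) ℂ)
    (σ : Matrix (Fin n) (Fin n) ℂ) (hσ : σ.IsHermitian) (hσn : ¬ σ.PosSemidef)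
    (hstat : lindblad H h σ = 0)
    (ρp ρm : Matrix (Fin n) (Fin n) ℂ) (hρp : ρp.PosSemidef) (hρm : ρm.PosSemidef)
    (hdec : σ = ρp - ρm) (horth : ρp * ρm = 0) (horth' : ρm * ρp = 0) :
    lindblad H h ρp = 0 ∧ lindblad H h ρm = 0 :=
  stmt11_general H hH h σ hstat ρp ρm hρp hρm hdec horth horth'
end
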